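/- arXiv:1510.01552 — 2 statements merged into one kernel-verified Lean document; each statement's English description precedes it below -/
import Mathlib

section
/- Let (X_i)_{i≥1} be i.i.d. real random variables with E[X₁] < 0 and continuous (atomless) distribution. Let S₀ = 0, S_n = Σ_{i=1}^n X_i, M = max_{n≥0} S_n, Z = argmax_{n≥0} S_n (a.s. unique and finite), and N = min{n ≥ 1 : S_n ≤ 0}. Then P(Z = 0, M = 0) = P(M = 0), and for every n ≥ 1 and every x ≥ 0, P(Z = n, M > x) = P(N > n, S_n > x) · P(M = 0). Equivalently, at the level of densities, f_{Z,M}(n,x) = Σ_{j>n} f_{N,S_n}(j,x) · P(M = 0) for all n ≥ 1 and x ≥ 0. -/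
open MeasureTheory ProbabilityTheory Filter Set

noncomputable section

namespace GF

/-- A lattice point of `ℤ²`. -/
abbrev Pt := ℤ × ℤ

/-- The unit vector `e₁ = (1,0)`. -/
def e1 : Pt := (1, 0)
/-- The unit vector `e₂ = (0,1)`. -/
def e2 : Pt := (0, 1)
/-- The diagonal vector `d = (1,1)`. -/
def dd : Pt := (1, 1)

/-- Strict coordinatewise inequality on `ℤ²`. -/
def ltc (u v : Pt) : Prop := u.1 < v.1 ∧ u.2 < v.2

/-- An up-right (unit steps `e₁`, `e₂`) lattice path from `x` to `y`. -/
structure URPath (x y : Pt) where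
  len : ℕ
  pts : ℕ → Pt
  first : pts 0 = x
  last : pts len = y
  step : ∀ i < len, pts (i + 1) = pts i + e1 ∨ pts (i + 1) = pts i + e2

/-- The weight of an up-right path: the sum of the weights of its vertices. -/
def URPath.weight (W : Pt → ℝ) {x y : Pt} (γ : URPath x y) : ℝ :=
  ∑ i ∈ Finset.range (γ.len + 1), W (γ.pts i)

/-- The last-passage time between `x` and `y`. -/
def lpt (W : Pt → ℝ) (x y : Pt) : ℝ :=
  sSup {t | ∃ γ : URPath x y, γ.weight W = t}

/-- The family `W` is i.i.d. exponential of rate `r` under `P`. -/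
def IIDExp {Ω : Type*} {ι : Type*} [MeasurableSpace Ω] (P : Measure Ω)
    (W : ι → Ω → ℝ) (r : ℝ) : Prop :=
  iIndepFun W P ∧ ∀ i, Measure.map (W i) P = expMeasure r

/-- A substrate: a bi-infinite down-right path through the origin. -/
def IsSubstrate (φ : ℤ → Pt) : Prop :=
  φ 0 = (0, 0) ∧ ∀ z : ℤ, φ (z + 1) = φ z + e1 ∨ φ (z + 1) = φ z - e2

/-- The substrate `φ` has a macroscopic concave wedge, with asymptotic slopes `-lm` at `-∞`
and `-lp` at `+∞`. -/
def HasConcaveWedge (φ : ℤ → Pt) (lm lp : ℝ) : Prop :=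
  Tendsto (fun z : ℤ => ((φ z).2 : ℝ) / ((φ z).1 : ℝ)) atBot (nhds (-lm)) ∧
    Tendsto (fun z : ℤ => ((φ z).2 : ℝ) / ((φ z).1 : ℝ)) atTop (nhds (-lp))

/-- `z` is (the index of) a microscopic concave corner of the substrate `φ`:
`φ_z - φ_{z-1} = -e₂` and `φ_{z+1} - φ_z = e₁`. -/
def IsCornerIdx (φ : ℤ → Pt) (z : ℤ) : Prop :=
  φ z = φ (z - 1) - e2 ∧ φ (z + 1) = φ z + e1

/-- The growth region of the substrate `φ`. -/
def growth (φ : ℤ → Pt) : Set Pt := {x | ∃ z, ltc (φ z) x}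

/-- The corner `φ z` is a root of the point `x`: among all concave corners `z'` with
`φ z' < x` it maximises the last-passage time `L(φ z' + d, x)`. -/
def IsRoot (W : Pt → ℝ) (φ : ℤ → Pt) (z : ℤ) (x : Pt) : Prop :=
  IsCornerIdx φ z ∧ ltc (φ z) x ∧
    ∀ z', IsCornerIdx φ z' → ltc (φ z') x → lpt W (φ z' + dd) x ≤ lpt W (φ z + dd) x

/-- The corner `φ z` is the asymptotic root in the direction `(1, a)`: for every sequence of
points of the growth region going to infinity with asymptotic slope `a`, it is eventually
its root. -/
def IsAsymRoot (W : Pt → ℝ) (φ : ℤ → Pt) (a : ℝ) (z : ℤ) : Prop :=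
  IsCornerIdx φ z ∧
    ∀ x : ℕ → Pt, (∀ n, x n ∈ growth φ) →
      Tendsto (fun n => (x n).1) atTop atTop →
      Tendsto (fun n => (x n).2) atTop atTop →
      Tendsto (fun n => ((x n).2 : ℝ) / ((x n).1 : ℝ)) atTop (nhds a) →
      ∀ᶠ n in atTop, IsRoot W φ z (x n)

/-- `ρ_a = √a / (1 + √a)`. -/
def rho (a : ℝ) : ℝ := Real.sqrt a / (1 + Real.sqrt a)

/-- The increments `X_z^{a,φ}` of the substrate random walk, built from the two independent
exponential families `E` (rate `ρ_a`, used on down/up steps) and `E'` (rate `1 - ρ_a`, used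
with a minus sign on right/left steps). -/
def inc (φ : ℤ → Pt) (E E' : ℤ → ℝ) (z : ℤ) : ℝ :=
  if 1 ≤ z then (if φ z = φ (z - 1) + e1 then -E' z else E z)
  else (if φ (z - 1) = φ z - e1 then E' z else -E z)

/-- The two-sided walk with increments `X`: `S 0 = 0`, `S z = ∑_{k=1}^z X k` for `z > 0` and
`S z = ∑_{k=z}^{-1} X (k+1)` for `z < 0`. -/
def walk (X : ℤ → ℝ) (z : ℤ) : ℝ :=
  if 0 ≤ z then ∑ k ∈ Finset.range z.toNat, X ((k : ℤ) + 1)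
  else ∑ k ∈ Finset.range (-z).toNat, X (-(k : ℤ))

/-- The law of the difference `E - F` of two independent exponential random variables of
rates `r1` and `r2`. -/
def diffExp (r1 r2 : ℝ) : Measure ℝ :=
  Measure.map (fun p : ℝ × ℝ => p.1 - p.2) ((expMeasure r1).prod (expMeasure r2))

/-- The Bernoulli substrate built from the step indicators `U`: `φ₋₁ = e₂`, `φ₀ = 0`,
`φ₁ = e₁`; for `z ≥ 1` the step `φ_{z+1} - φ_z` is `-e₂` when the corresponding indicator is
`true` (else `e₁`), and for `z ≤ -1` the step `φ_{z-1} - φ_z` is `e₂` when the corresponding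
indicator is `true` (else `-e₁`). -/
def bsub (U : ℤ → Bool) : ℤ → Pt := fun z =>
  if 1 ≤ z then
    (1, 0) + ∑ k ∈ Finset.range (z - 1).toNat, (if U ((k : ℤ) + 2) then -(0, 1) else ((1, 0) : Pt))
  else if z = 0 then 0
  else (0, 1) + ∑ k ∈ Finset.range (-z - 1).toNat, (if U (-(k : ℤ) - 2) then (0, 1) else -((1, 0) : Pt))

/-- The step indicators of a Bernoulli substrate with parameters `p₊` (on the right) and
`p₋` (on the left): independent, `P (U z = true) = p₊` for `z ≥ 2` and `= p₋` for `z ≤ -2`. -/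
def BernoulliSteps {Ω : Type*} [MeasurableSpace Ω] (P : Measure Ω)
    (U : ℤ → Ω → Bool) (pp pm : ℝ) : Prop :=
  iIndepFun U P ∧
    (∀ z : ℤ, 2 ≤ z → P {ω | U z ω = true} = ENNReal.ofReal pp) ∧
    (∀ z : ℤ, z ≤ -2 → P {ω | U z ω = true} = ENNReal.ofReal pm)

/-- The substrate walk of the Bernoulli substrate model, as a function of the sample point. -/
def bWalk {Ω : Type*} (U : ℤ → Ω → Bool) (E E' : ℤ → Ω → ℝ) (ω : Ω) : ℤ → ℝ :=
  walk (inc (bsub fun z => U z ω) (fun z => E z ω) fun z => E' z ω)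

/-- The periodic substrate with parameters `k₊`, `k₋`: for `z > 0` it repeatedly takes `k₊`
steps `e₁` followed by one step `-e₂`, and for `z < 0` it repeatedly takes `k₋` steps up
followed by one step left. Its concave corners are the indices `n (k₊ + 1)`, `n ≥ 0`, and
`-n (k₋ + 1)`, `n ≥ 0`. -/
def psub (kp km : ℕ) : ℤ → Pt := fun z =>
  if 0 ≤ z then (z - z / (kp + 1), -(z / (kp + 1)))
  else (-((-z) / (km + 1)), (-z) - (-z) / (km + 1))

/-- The finite rooted substrate with parameter `m`: down the vertical line `x = -1` (so that
`φ_z = |z+1| e₂ - e₁` for `z ≤ -2`), `φ₋₁ = e₂`, then `φ_z = z e₁` for `0 ≤ z ≤ m`, one step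
down, and then right along the line `y = -1`.  It has exactly three concave corners, at
`(-1,1)`, `(0,0)` and `(m,-1)`. -/
def frs (m : ℕ) : ℤ → Pt := fun z =>
  if z ≤ -2 then (-1, -z - 1)
  else if z = -1 then (0, 1)
  else if z ≤ (m : ℤ) then (z, 0)
  else (z - 1, -1)

/-- The flat substrate, whose set of concave corners is the antidiagonal `{(z,-z) : z ∈ ℤ}`;
the corner `(z, -z)` has index `2 z`. -/
def flat : ℤ → Pt := fun w =>
  if 2 ∣ w then (w / 2, -(w / 2)) else ((w + 1) / 2, (-(w - 1)) / 2)

/-- For the flat substrate: the geodesic tree rooted at the corner `(z, -z)` has height at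
least `n`, i.e. it contains a point of the line `x(1) + x(2) = n + 1`. -/
def HeightGe (W : Pt → ℝ) (z : ℤ) (n : ℕ) : Prop :=
  ∃ x : Pt, x.1 + x.2 = (n : ℤ) + 1 ∧ IsRoot W flat (2 * z) x

/-- The cumulative profile of a weighted substrate: `ν(0) = 0`, `ν(k) = ∑_{i=1}^k ν_i` for
`k > 0` and `ν(k) = -∑_{i=k}^{-1} ν_i` for `k < 0`. -/
def cum (ν : ℤ → ℝ) (k : ℤ) : ℝ :=
  if 0 ≤ k then ∑ i ∈ Finset.range k.toNat, ν ((i : ℤ) + 1)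
  else -∑ i ∈ Finset.range (-k).toNat, ν (k + (i : ℤ))

/-- In the weighted substrate model, `k` is a root of the point `(x, n)`: it maximises
`j ↦ ν(j) + L((j,1),(x,n))` over `j ≤ x`. -/
def IsKRoot (W : Pt → ℝ) (ν : ℤ → ℝ) (k x n : ℤ) : Prop :=
  k ≤ x ∧ ∀ j ≤ x, cum ν j + lpt W (j, 1) (x, n) ≤ cum ν k + lpt W (k, 1) (x, n)

/-- In the weighted substrate model, `k` is the asymptotic root in the direction `(1, a)`. -/
def IsAsymKRoot (W : Pt → ℝ) (ν : ℤ → ℝ) (a : ℝ) (k : ℤ) : Prop :=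
  ∀ x t : ℕ → ℤ, (∀ n, 1 ≤ t n) →
    Tendsto x atTop atTop → Tendsto t atTop atTop →
    Tendsto (fun n => (t n : ℝ) / (x n : ℝ)) atTop (nhds a) →
    ∀ᶠ n in atTop, IsKRoot W ν k (x n) (t n)

end GF

open GF

/-!
The event `{Z = n, M > x}` is the intersection of `{S_k ≤ S_n for k ≤ n, S_n > x}`, which depends
only on `X_0, …, X_{n-1}`, with `{S_{n+k} - S_n ≤ 0 for all k}`, which depends only on the later
increments; so its probability is a product. The shifted increments are again i.i.d., so the second
factor is `P(M = 0)`. Reversing the order of the first `n` increments turns the first event into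
`{S_j ≥ 0 for j ≤ n, S_n > x}`, and as partial sums of independent atomless increments have no
atoms, this is a.s. the event `{N > n, S_n > x}`. Finally `M = 0` forces `Z = 0` as soon as the
supremum is finite, and it is a.s. because the walk drifts to `-∞` by the strong law of large numbers.
-/

namespace ProbabilityTheory

variable {Ω ι 𝓧 : Type*} [MeasurableSpace 𝓧]

lemma measurable_iSup_comap_of_mem (X : ι → Ω → 𝓧) {s : Set ι} {i : ι} (hi : i ∈ s) :
    Measurable[⨆ j ∈ s, MeasurableSpace.comap (X j) ‹_›] (X i) :=
  Measurable.of_comap_le (le_iSup₂ (f := fun j (_ : j ∈ s) ↦ MeasurableSpace.comap (X j) _) i hi)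

variable [MeasurableSpace Ω] {P : Measure Ω}

lemma iIndepFun.identDistrib_comp_of_injective {X : ι → Ω → 𝓧} (hX : ∀ i, Measurable (X i))
    (h : iIndepFun X P) {μ : Measure 𝓧} (hμ : ∀ i, P.map (X i) = μ) {g : ι → ι}
    (hg : Function.Injective g) :
    IdentDistrib (fun ω i ↦ X (g i) ω) (fun ω i ↦ X i ω) P P where
  aemeasurable_fst := (measurable_pi_lambda _ fun i ↦ hX (g i)).aemeasurable
  aemeasurable_snd := (measurable_pi_lambda _ hX).aemeasurable
  map_eq := by
    rw [(h.precomp hg).map_fun_eq_infinitePi_map fun i ↦ hX (g i),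
      h.map_fun_eq_infinitePi_map hX]
    simp only [hμ]

lemma iIndepFun.measure_inter_eq_mul_of_disjoint {X : ι → Ω → 𝓧} (hX : ∀ i, Measurable (X i))
    (h : iIndepFun X P) {s t : Set ι} (hst : Disjoint s t) {A B : Set Ω}
    (hA : MeasurableSet[⨆ i ∈ s, MeasurableSpace.comap (X i) ‹_›] A)
    (hB : MeasurableSet[⨆ i ∈ t, MeasurableSpace.comap (X i) ‹_›] B) :
    P (A ∩ B) = P A * P B :=
  ((indep_iSup_of_disjoint (fun i ↦ (hX i).comap_le) h hst).indepSet_of_measurableSet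
    hA hB).measure_inter_eq_mul

lemma IndepFun.measure_add_eq_const_eq_zero {G : Type*} [AddGroup G] [MeasurableSpace G]
    [MeasurableAdd₂ G] [MeasurableSingletonClass G] [IsFiniteMeasure P]
    {Y Z : Ω → G} (hY : Measurable Y) (hZ : Measurable Z) (h : IndepFun Y Z P)
    (hZ0 : ∀ g, P {ω | Z ω = g} = 0) (c : G) : P {ω | Y ω + Z ω = c} = 0 := by
  have hs : MeasurableSet {p : G × G | p.1 + p.2 = c} :=
    (measurable_fst.add measurable_snd) (measurableSet_singleton c)
  have hfiber (y : G) : P.map Z (Prod.mk y ⁻¹' {p : G × G | p.1 + p.2 = c}) = 0 := by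
    have : Prod.mk y ⁻¹' {p : G × G | p.1 + p.2 = c} = {-y + c} := by
      ext z; simp [eq_neg_add_iff_add_eq]
    rw [this, Measure.map_apply hZ (measurableSet_singleton _)]
    exact hZ0 _
  change P ((fun ω ↦ (Y ω, Z ω)) ⁻¹' {p | p.1 + p.2 = c}) = 0
  rw [← Measure.map_apply (hY.prodMk hZ) hs,
    (indepFun_iff_map_prod_eq_prod_map_map hY.aemeasurable hZ.aemeasurable).1 h,
    Measure.prod_apply hs]
  simp only [hfiber, lintegral_zero]

end ProbabilityTheory

namespace RandomWalk

lemma forall_sum_le_and_lt_iSup_iff (x : ℕ → ℝ) (n : ℕ) (r : ℝ) :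
    ((∀ k, ∑ i ∈ Finset.range k, x i ≤ ∑ i ∈ Finset.range n, x i) ∧
        r < ⨆ k, ∑ i ∈ Finset.range k, x i) ↔
      ((∀ k ≤ n, ∑ i ∈ Finset.range k, x i ≤ ∑ i ∈ Finset.range n, x i) ∧
        r < ∑ i ∈ Finset.range n, x i) ∧ ∀ k, ∑ i ∈ Finset.range k, x (n + i) ≤ 0 := by
  have hshift (k : ℕ) : ∑ i ∈ Finset.range (n + k), x i =
      ∑ i ∈ Finset.range n, x i + ∑ i ∈ Finset.range k, x (n + i) := Finset.sum_range_add _ _ _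
  have hmax : (∀ k, ∑ i ∈ Finset.range k, x i ≤ ∑ i ∈ Finset.range n, x i) ↔
      (∀ k ≤ n, ∑ i ∈ Finset.range k, x i ≤ ∑ i ∈ Finset.range n, x i) ∧
        ∀ k, ∑ i ∈ Finset.range k, x (n + i) ≤ 0 := by
    refine ⟨fun h ↦ ⟨fun k _ ↦ h k, fun k ↦ by linarith [h (n + k), hshift k]⟩,
      fun ⟨hle, hge⟩ k ↦ ?_⟩
    rcases le_or_gt k n with hk | hk
    · exact hle k hk
    · obtain ⟨k, rfl⟩ := Nat.exists_eq_add_of_le hk.le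
      linarith [hge k, hshift k]
  rw [and_right_comm, ← hmax]
  refine and_congr_right fun h ↦ ?_
  have hsup : (⨆ k, ∑ i ∈ Finset.range k, x i) = ∑ i ∈ Finset.range n, x i :=
    IsGreatest.csSup_eq ⟨mem_range_self n, forall_mem_range.2 h⟩
  rw [hsup]

def revBelow (n i : ℕ) : ℕ := if i < n then n - 1 - i else i

lemma revBelow_injective (n : ℕ) : Function.Injective (revBelow n) := by
  intro i j h
  unfold revBelow at h
  split_ifs at h <;> omega

lemma sum_range_revBelow (x : ℕ → ℝ) {n k : ℕ} (hk : k ≤ n) :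
    ∑ i ∈ Finset.range k, x (revBelow n i) =
      ∑ i ∈ Finset.range n, x i - ∑ i ∈ Finset.range (n - k), x i := by
  induction k with
  | zero => simp
  | succ k ih =>
    obtain ⟨m, hm⟩ : ∃ m, n - k = m + 1 := ⟨n - k - 1, by omega⟩
    rw [Finset.sum_range_succ, ih (by omega), hm, Finset.sum_range_succ,
      show n - (k + 1) = m by omega, revBelow, if_pos (by omega), show n - 1 - k = m by omega]
    ring

variable {Ω : Type*} [MeasurableSpace Ω] {P : Measure Ω} {X : ℕ → Ω → ℝ}

lemma ae_tendsto_sum_range_atBot (hX : ∀ i, Measurable (X i)) (h : iIndepFun X P)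
    (hident : ∀ i, P.map (X i) = P.map (X 0)) (hint : Integrable (X 0) P)
    (hmean : ∫ ω, X 0 ω ∂P < 0) :
    ∀ᵐ ω ∂P, Tendsto (fun k ↦ ∑ i ∈ Finset.range k, X i ω) atTop atBot := by
  have hident' (i : ℕ) : IdentDistrib (X i) (X 0) P P :=
    ⟨(hX i).aemeasurable, (hX 0).aemeasurable, hident i⟩
  filter_upwards [strong_law_ae_real X hint (fun i j hij ↦ h.indepFun hij) hident'] with ω hω
  refine (Tendsto.atTop_mul_neg hmean tendsto_natCast_atTop_atTop hω).congr' ?_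
  filter_upwards [eventually_ne_atTop 0] with k hk
  field_simp

lemma measure_sum_range_eq_zero [IsFiniteMeasure P] (hX : ∀ i, Measurable (X i))
    (h : iIndepFun X P) (hcont : ∀ r, P {ω | X 0 ω = r} = 0) {j : ℕ} (hj : j ≠ 0) :
    P {ω | ∑ i ∈ Finset.range j, X i ω = 0} = 0 := by
  have hsplit : {ω | ∑ i ∈ Finset.range j, X i ω = 0} =
      {ω | ∑ i ∈ Finset.Ico 1 j, X i ω + X 0 ω = 0} := by
    ext ω
    simp [Finset.sum_range_eq_add_Ico _ (Nat.pos_of_ne_zero hj), add_comm]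
  have hindep := h.indepFun_finsetSum_of_notMem hX (show 0 ∉ Finset.Ico 1 j by simp)
  rw [Finset.sum_fn] at hindep
  rw [hsplit]
  exact hindep.measure_add_eq_const_eq_zero (Finset.measurable_sum _ fun i _ ↦ hX i) (hX 0) hcont 0

lemma measure_argmax_inter_lt_iSup_eq_mul (hX : ∀ i, Measurable (X i)) (h : iIndepFun X P)
    (n : ℕ) (r : ℝ) :
    P ({ω | ∀ k, ∑ i ∈ Finset.range k, X i ω ≤ ∑ i ∈ Finset.range n, X i ω} ∩
      {ω | r < ⨆ k, ∑ i ∈ Finset.range k, X i ω}) =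
    P {ω | (∀ k ≤ n, ∑ i ∈ Finset.range k, X i ω ≤ ∑ i ∈ Finset.range n, X i ω) ∧
        r < ∑ i ∈ Finset.range n, X i ω} *
      P {ω | ∀ k, ∑ i ∈ Finset.range k, X (n + i) ω ≤ 0} := by
  rw [← ofPred_and]
  simp_rw [forall_sum_le_and_lt_iSup_iff, ofPred_and]
  refine h.measure_inter_eq_mul_of_disjoint hX (Iio_disjoint_Ici (le_refl n)) ?_ ?_
  · have hsum : ∀ k ≤ n, Measurable[⨆ i ∈ Iio n, MeasurableSpace.comap (X i) inferInstance]
        fun ω ↦ ∑ i ∈ Finset.range k, X i ω := fun k hk ↦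
      Finset.measurable_sum _ fun i hi ↦
        measurable_iSup_comap_of_mem X (mem_Iio.2 ((Finset.mem_range.1 hi).trans_le hk))
    simp only [ofPred_forall]
    exact (MeasurableSet.iInter fun k ↦ MeasurableSet.iInter fun hk ↦
      measurableSet_le (hsum k hk) (hsum n le_rfl)).inter
        (measurableSet_lt measurable_const (hsum n le_rfl))
  · have hsum (k : ℕ) : Measurable[⨆ i ∈ Ici n, MeasurableSpace.comap (X i) inferInstance]
        fun ω ↦ ∑ i ∈ Finset.range k, X (n + i) ω :=
      Finset.measurable_sum _ fun i _ ↦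
        measurable_iSup_comap_of_mem X (mem_Ici.2 (Nat.le_add_right n i))
    simp only [ofPred_forall]
    exact MeasurableSet.iInter fun k ↦ measurableSet_le (hsum k) measurable_const

lemma measure_shift_sum_nonpos_eq (hX : ∀ i, Measurable (X i)) (h : iIndepFun X P)
    (hident : ∀ i, P.map (X i) = P.map (X 0)) (n : ℕ) :
    P {ω | ∀ k, ∑ i ∈ Finset.range k, X (n + i) ω ≤ 0} =
      P {ω | ∀ k, ∑ i ∈ Finset.range k, X i ω ≤ 0} :=
  (h.identDistrib_comp_of_injective hX hident (add_right_injective n)).measure_mem_eq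
    (s := {x : ℕ → ℝ | ∀ k, ∑ i ∈ Finset.range k, x i ≤ 0}) (by measurability)

lemma measure_maxUpTo_eq_measure_nonnegUpTo (hX : ∀ i, Measurable (X i)) (h : iIndepFun X P)
    (hident : ∀ i, P.map (X i) = P.map (X 0)) (n : ℕ) (r : ℝ) :
    P {ω | (∀ k ≤ n, ∑ i ∈ Finset.range k, X i ω ≤ ∑ i ∈ Finset.range n, X i ω) ∧
        r < ∑ i ∈ Finset.range n, X i ω} =
      P {ω | (∀ k ≤ n, 0 ≤ ∑ i ∈ Finset.range k, X i ω) ∧ r < ∑ i ∈ Finset.range n, X i ω} := by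
  set B := {x : ℕ → ℝ | (∀ k ≤ n, ∑ i ∈ Finset.range k, x i ≤ ∑ i ∈ Finset.range n, x i) ∧
    r < ∑ i ∈ Finset.range n, x i}
  have hrev : (fun ω i ↦ X (revBelow n i) ω) ⁻¹' B =
      {ω | (∀ k ≤ n, 0 ≤ ∑ i ∈ Finset.range k, X i ω) ∧ r < ∑ i ∈ Finset.range n, X i ω} := by
    ext ω
    simp only [B, mem_preimage, mem_ofPred_eq, sum_range_revBelow (X · ω) le_rfl, Nat.sub_self,
      Finset.range_zero, Finset.sum_empty, sub_zero]
    refine and_congr_left fun _ ↦ ⟨fun hle k hk ↦ ?_, fun hge k hk ↦ ?_⟩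
    · have := hle (n - k) (Nat.sub_le n k)
      rwa [sum_range_revBelow (X · ω) (Nat.sub_le n k), Nat.sub_sub_self hk, sub_le_self_iff]
        at this
    · rw [sum_range_revBelow (X · ω) hk, sub_le_self_iff]
      exact hge (n - k) (Nat.sub_le n k)
  rw [← hrev]
  exact ((h.identDistrib_comp_of_injective hX hident (revBelow_injective n)).measure_mem_eq
    (s := B) (by measurability)).symm

lemma measure_nonnegUpTo_eq_measure_posUpTo [IsFiniteMeasure P] (hX : ∀ i, Measurable (X i))
    (h : iIndepFun X P) (hcont : ∀ r, P {ω | X 0 ω = r} = 0) (n : ℕ) (r : ℝ) :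
    P {ω | (∀ k ≤ n, 0 ≤ ∑ i ∈ Finset.range k, X i ω) ∧ r < ∑ i ∈ Finset.range n, X i ω} =
      P {ω | (∀ k, 1 ≤ k → k ≤ n → 0 < ∑ i ∈ Finset.range k, X i ω) ∧
        r < ∑ i ∈ Finset.range n, X i ω} := by
  have hne : ∀ᵐ ω ∂P, ∀ k, k ≠ 0 → ∑ i ∈ Finset.range k, X i ω ≠ 0 := by
    refine ae_all_iff.2 fun k ↦ ?_
    rcases eq_or_ne k 0 with rfl | hk
    · exact .of_forall fun _ h ↦ absurd rfl h
    · filter_upwards [measure_eq_zero_iff_ae_notMem.1 (measure_sum_range_eq_zero hX h hcont hk)]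
        with ω hω _ using hω
  refine measure_congr (eventuallyEq_set.2 ?_)
  filter_upwards [hne] with ω hω
  refine and_congr_left fun _ ↦ ⟨fun hle k hk hkn ↦ ?_, fun hpos k hkn ↦ ?_⟩
  · exact (hle k hkn).lt_of_ne' (hω k (by omega))
  · rcases eq_or_ne k 0 with rfl | hk
    · simp
    · exact (hpos k (by omega) hkn).le

end RandomWalk

open RandomWalk

/-- **Proposition (maximum and its location vs. hitting time).** For a random walk with
i.i.d. increments of negative mean and continuous distribution, with `M = max_{n≥0} S_n`,
`Z = argmax_{n≥0} S_n` and `N = min{n ≥ 1 : S_n ≤ 0}`: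
`P(Z = 0, M = 0) = P(M = 0)` and `P(Z = n, M > x) = P(N > n, S_n > x) ⬝ P(M = 0)` for all
`n ≥ 1`, `x ≥ 0`. -/
theorem argmax_max_hitting_time_identity
    {Ω : Type*} [MeasurableSpace Ω] (P : Measure Ω) [IsProbabilityMeasure P]
    (X : ℕ → Ω → ℝ) (hmeas : ∀ i, Measurable (X i))
    (hindep : iIndepFun X P)
    (hident : ∀ i, Measure.map (X i) P = Measure.map (X 0) P)
    (hint : Integrable (X 0) P) (hmean : ∫ ω, X 0 ω ∂P < 0)
    (hcont : ∀ r : ℝ, P {ω | X 0 ω = r} = 0)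
    (S : ℕ → Ω → ℝ) (hS : ∀ n ω, S n ω = ∑ i ∈ Finset.range n, X i ω) :
    (P ({ω | ∀ k, S k ω ≤ S 0 ω} ∩ {ω | (⨆ k, S k ω) = 0}) = P {ω | (⨆ k, S k ω) = 0}) ∧
      ∀ n : ℕ, 1 ≤ n → ∀ x : ℝ, 0 ≤ x →
        P ({ω | ∀ k, S k ω ≤ S n ω} ∩ {ω | x < ⨆ k, S k ω}) =
          P {ω | (∀ j : ℕ, 1 ≤ j → j ≤ n → 0 < S j ω) ∧ x < S n ω} *
            P {ω | ∀ k, S k ω ≤ 0} := by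
  obtain rfl : S = fun k ω ↦ ∑ i ∈ Finset.range k, X i ω := funext₂ hS
  refine ⟨measure_congr (eventuallyEq_set.2 ?_), fun n _ x _ ↦ ?_⟩
  · filter_upwards [ae_tendsto_sum_range_atBot hmeas hindep hident hint hmean] with ω hω
    refine and_iff_right_of_imp fun (hsup : _ = _) k ↦ ?_
    rw [Finset.sum_range_zero, ← hsup]
    exact le_ciSup (bddAbove_range_of_tendsto_atTop_atBot hω) k
  · rw [measure_argmax_inter_lt_iSup_eq_mul hmeas hindep, measure_maxUpTo_eq_measure_nonnegUpTo hmeas hindep hident,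
      measure_nonnegUpTo_eq_measure_posUpTo hmeas hindep hcont,
      measure_shift_sum_nonpos_eq hmeas hindep hident]
end
end

section
/- Consider exponential last-passage percolation with the flat substrate whose concave corners are the anti-diagonal {(z,−z) : z ∈ ℤ}, and let H₀ be the height of the geodesic tree rooted at the origin. Then there exists c > 0 such that P(H₀ ≥ n) ≥ c/n for all n ≥ 1, and consequently E[H₀] = ∞. -/
open MeasureTheory ProbabilityTheory Filter Set

noncomputable section

open GF

/-!
The point `(n, 1)` lies strictly above exactly the `n` corners `(u, -u)`, `0 ≤ u < n`, so one of
them is its root. Translation by `(u, -u)` is a symmetry of the flat substrate and preserves the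
i.i.d. law of the weights, so `(u, -u)` is the root of `(n, 1)` with the same probability as the
origin is the root of `(n - u, 1 + u)`, a point of the line `x(1) + x(2) = n + 1`; that event
implies `H₀ ≥ n`. Summing over `u` gives `1 ≤ n P(H₀ ≥ n)`, and the harmonic series diverges.
-/

section IIDField

variable {Ω ι κ X : Type*} [MeasurableSpace Ω] [MeasurableSpace X] {P : Measure Ω}
  [IsProbabilityMeasure P] {W : ι → Ω → X} {ν : Measure X} [IsProbabilityMeasure ν]

lemma map_fun_eq_infinitePi_of_iid [Countable ι] (hind : iIndepFun W P)
    (hlaw : ∀ i, P.map (W i) = ν) :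
    P.map (fun ω i => W i ω) = Measure.infinitePi fun _ => ν := by
  have hmeas : ∀ i, AEMeasurable (W i) P := fun i =>
    .of_map_ne_zero (by rw [hlaw]; exact IsProbabilityMeasure.ne_zero ν)
  rw [(iIndepFun_iff_map_fun_eq_infinitePi_map₀' hmeas).mp hind]
  simp_rw [hlaw]

lemma infinitePi_map_comp_equiv (e : κ ≃ ι) :
    (Measure.infinitePi fun _ : ι => ν).map (fun w => w ∘ e) =
      Measure.infinitePi fun _ : κ => ν := by
  have hcomp : (fun w : ι → X => w ∘ e) = MeasurableEquiv.piCongrLeft (fun _ => X) e.symm := by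
    ext w k
    simp [MeasurableEquiv.coe_piCongrLeft, Equiv.piCongrLeft_apply]
  rw [hcomp]
  exact Measure.infinitePi_map_piCongrLeft (fun _ => ν) e.symm

lemma measure_comp_equiv_mem_eq [Countable ι] (hind : iIndepFun W P)
    (hlaw : ∀ i, P.map (W i) = ν) (e : ι ≃ ι) {E : Set (ι → X)} (hE : MeasurableSet E) :
    P {ω | (fun i => W (e i) ω) ∈ E} = P {ω | (fun i => W i ω) ∈ E} := by
  have hmap := map_fun_eq_infinitePi_of_iid hind hlaw
  have hfield : AEMeasurable (fun ω i => W i ω) P :=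
    .of_map_ne_zero (by rw [hmap]; exact IsProbabilityMeasure.ne_zero _)
  have hcomp : Measurable fun w : ι → X => w ∘ e := by fun_prop
  calc P {ω | (fun i => W (e i) ω) ∈ E}
      = P.map (fun ω i => W i ω) ((fun w => w ∘ e) ⁻¹' E) :=
        (Measure.map_apply_of_aemeasurable hfield (hcomp hE)).symm
    _ = P.map (fun ω i => W i ω) E := by
        rw [hmap, ← Measure.map_apply hcomp hE, infinitePi_map_comp_equiv]
    _ = P {ω | (fun i => W i ω) ∈ E} := Measure.map_apply_of_aemeasurable hfield hE

end IIDField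

lemma ENNReal.tsum_ofReal_eq_top_of_not_summable {α : Type*} {f : α → ℝ} (hf₀ : ∀ a, 0 ≤ f a)
    (hf : ¬Summable f) : ∑' a, ENNReal.ofReal (f a) = ⊤ := by
  by_contra h
  exact hf (by simpa [ENNReal.toReal_ofReal (hf₀ _)] using ENNReal.summable_toReal h)

namespace GF

def URPath.translate {x y : Pt} (γ : URPath x y) (v : Pt) : URPath (x + v) (y + v) where
  len := γ.len
  pts i := γ.pts i + v
  first := by rw [γ.first]
  last := by rw [γ.last]
  step i hi := by rcases γ.step i hi with h | h <;> simp [h, add_right_comm]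

lemma weights_subset_translate (W : Pt → ℝ) (x y v : Pt) :
    {t | ∃ γ : URPath x y, γ.weight (fun p => W (p + v)) = t} ⊆
      {t | ∃ γ : URPath (x + v) (y + v), γ.weight W = t} := by
  rintro _ ⟨γ, rfl⟩
  exact ⟨γ.translate v, rfl⟩

lemma lpt_translate (W : Pt → ℝ) (x y v : Pt) :
    lpt (fun p => W (p + v)) x y = lpt W (x + v) (y + v) := by
  refine congrArg sSup (subset_antisymm (weights_subset_translate W x y v) ?_)
  have h := weights_subset_translate (fun p => W (p + v)) (x + v) (y + v) (-v)
  rw [add_neg_cancel_right, add_neg_cancel_right] at h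
  simpa only [neg_add_cancel_right] using h

/-- What the weight of a path depends on; it ranges over a countable type, which makes `lpt` a
countable supremum. -/
def URPath.trace {x y : Pt} (γ : URPath x y) : (n : ℕ) × (Fin (n + 1) → Pt) :=
  ⟨γ.len, fun i => γ.pts i⟩

def traceWeight (W : Pt → ℝ) (q : (n : ℕ) × (Fin (n + 1) → Pt)) : ℝ :=
  ∑ i, W (q.2 i)

lemma URPath.weight_eq_traceWeight (W : Pt → ℝ) {x y : Pt} (γ : URPath x y) :
    γ.weight W = traceWeight W γ.trace :=
  (Fin.sum_univ_eq_sum_range (fun i => W (γ.pts i)) _).symm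

lemma lpt_eq_iSup_traceWeight (W : Pt → ℝ) (x y : Pt) :
    lpt W x y = ⨆ q : range (URPath.trace (x := x) (y := y)), traceWeight W q := by
  rw [lpt, ← sSup_range]
  congr 1
  ext t
  simp [URPath.weight_eq_traceWeight]

lemma measurable_lpt (x y : Pt) : Measurable fun W : Pt → ℝ => lpt W x y := by
  simp_rw [lpt_eq_iSup_traceWeight]
  exact Measurable.iSup fun q => Finset.measurable_sum _ fun i _ => measurable_pi_apply _

lemma measurableSet_isRoot (φ : ℤ → Pt) (z : ℤ) (x : Pt) :
    MeasurableSet {W : Pt → ℝ | IsRoot W φ z x} :=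
  measurableSet_setOfPred.mpr <| measurable_const.and <| measurable_const.and <|
    Measurable.forall fun _ => measurable_const.imp <| measurable_const.imp <|
      measurableSet_setOfPred.mp (measurableSet_le (measurable_lpt _ _) (measurable_lpt _ _))

lemma ltc_add_right_iff {a b : Pt} (v : Pt) : ltc (a + v) (b + v) ↔ ltc a b := by
  simp only [ltc, Prod.fst_add, Prod.snd_add, add_lt_add_iff_right]

lemma isCornerIdx_add_period {φ : ℤ → Pt} {k : ℤ} {v : Pt} (hφ : ∀ j, φ (j + k) = φ j + v)
    (j : ℤ) : IsCornerIdx φ (j + k) ↔ IsCornerIdx φ j := by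
  have hpred : φ (j + k - 1) = φ (j - 1) + v := by rw [← hφ, sub_add_eq_add_sub]
  have hsucc : φ (j + k + 1) = φ (j + 1) + v := by rw [← hφ, add_right_comm]
  simp only [IsCornerIdx, hφ, hpred, hsucc, add_sub_right_comm _ v, add_right_comm _ v,
    add_left_inj]

lemma isRoot_add_period {φ : ℤ → Pt} {k : ℤ} {v : Pt} (hφ : ∀ j, φ (j + k) = φ j + v)
    (W : Pt → ℝ) (j : ℤ) (x : Pt) :
    IsRoot W φ (j + k) (x + v) ↔ IsRoot (fun p => W (p + v)) φ j x := by
  have hlpt : ∀ i, lpt W (φ i + v + dd) (x + v) = lpt (fun p => W (p + v)) (φ i + dd) x := by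
    intro i
    rw [lpt_translate, add_right_comm]
  rw [IsRoot, IsRoot, ← (Equiv.addRight k).forall_congr_right]
  simp only [Equiv.coe_addRight, isCornerIdx_add_period hφ, hφ, ltc_add_right_iff, hlpt]

lemma flat_add_two_mul (w z : ℤ) : flat (w + 2 * z) = flat w + (z, -z) := by
  have hdvd : 2 ∣ w + 2 * z ↔ 2 ∣ w := by omega
  unfold flat
  split_ifs <;> simp only [Prod.mk_add_mk, Prod.mk.injEq] <;> omega

lemma flat_two_mul (u : ℤ) : flat (2 * u) = (u, -u) := by
  simp [flat]

lemma isCornerIdx_flat_iff (w : ℤ) : IsCornerIdx flat w ↔ 2 ∣ w := by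
  unfold IsCornerIdx flat
  split_ifs <;> simp only [e1, e2, Prod.mk_add_mk, Prod.mk_sub_mk, Prod.mk.injEq] <;> omega

lemma ltc_flat_two_mul_iff (u : ℤ) (x : Pt) :
    ltc (flat (2 * u)) x ↔ u ∈ Finset.Ioo (-x.2) x.1 := by
  rw [flat_two_mul, ltc, Finset.mem_Ioo]
  omega

lemma exists_isRoot_flat (W : Pt → ℝ) (x : Pt) (hx : 2 ≤ x.1 + x.2) :
    ∃ u ∈ Finset.Ioo (-x.2) x.1, IsRoot W flat (2 * u) x := by
  obtain ⟨u, hu, hmax⟩ := Finset.exists_max_image (Finset.Ioo (-x.2) x.1)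
    (fun u => lpt W (flat (2 * u) + dd) x) ⟨x.1 - 1, Finset.mem_Ioo.mpr ⟨by omega, by omega⟩⟩
  refine ⟨u, hu, (isCornerIdx_flat_iff _).mpr ⟨u, rfl⟩, (ltc_flat_two_mul_iff u x).mpr hu, ?_⟩
  rintro _ hcorner hlt
  obtain ⟨u', rfl⟩ := (isCornerIdx_flat_iff _).mp hcorner
  exact hmax u' ((ltc_flat_two_mul_iff u' x).mp hlt)

lemma isRoot_flat_two_mul_iff (W : Pt → ℝ) (z : ℤ) (x : Pt) :
    IsRoot W flat (2 * z) x ↔ IsRoot (fun p => W (p + (z, -z))) flat 0 (x - (z, -z)) := by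
  simpa using isRoot_add_period (flat_add_two_mul · z) W 0 (x - (z, -z))

section HeightLowerBound

open scoped ENNReal

variable {Ω : Type*} [MeasurableSpace Ω] {P : Measure Ω} [IsProbabilityMeasure P]
  {W : Pt → Ω → ℝ} {ν : Measure ℝ} [IsProbabilityMeasure ν]

lemma measure_isRoot_flat_two_mul (hind : iIndepFun W P) (hlaw : ∀ p, P.map (W p) = ν)
    (z : ℤ) (x : Pt) :
    P {ω | IsRoot (fun p => W p ω) flat (2 * z) x} =
      P {ω | IsRoot (fun p => W p ω) flat 0 (x - (z, -z))} := by
  simp_rw [isRoot_flat_two_mul_iff]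
  exact measure_comp_equiv_mem_eq hind hlaw (Equiv.addRight (z, -z))
    (measurableSet_isRoot flat 0 _)

lemma inv_natCast_le_measure_heightGe (hind : iIndepFun W P) (hlaw : ∀ p, P.map (W p) = ν)
    {n : ℕ} (hn : 1 ≤ n) :
    (n : ℝ≥0∞)⁻¹ ≤ P {ω | HeightGe (fun p => W p ω) 0 n} := by
  set x : Pt := ((n : ℤ), 1)
  set H := {ω | HeightGe (fun p => W p ω) 0 n}
  set root : ℤ → Set Ω := fun u => {ω | IsRoot (fun p => W p ω) flat (2 * u) x}
  have hroot_le : ∀ u, P (root u) ≤ P H := fun u => by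
    rw [measure_isRoot_flat_two_mul hind hlaw]
    refine measure_mono fun ω h => ⟨x - (u, -u), ?_, by rwa [mul_zero]⟩
    simp only [x, Prod.fst_sub, Prod.snd_sub]
    ring
  have hcover : univ ⊆ ⋃ u ∈ Finset.Ioo (-1 : ℤ) n, root u := fun ω _ => by
    obtain ⟨u, hu, h⟩ := exists_isRoot_flat (fun p => W p ω) x (by simp [x]; omega)
    exact mem_biUnion hu h
  have hcard : (Finset.Ioo (-1 : ℤ) n).card = n := by simp
  rw [ENNReal.inv_le_iff_le_mul (by simp) (by simp)]
  calc 1 = P univ := measure_univ.symm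
    _ ≤ P (⋃ u ∈ Finset.Ioo (-1 : ℤ) n, root u) := measure_mono hcover
    _ ≤ ∑ u ∈ Finset.Ioo (-1 : ℤ) n, P (root u) := measure_biUnion_finset_le _ _
    _ ≤ ∑ u ∈ Finset.Ioo (-1 : ℤ) n, P H := Finset.sum_le_sum fun u _ => hroot_le u
    _ = n * P H := by rw [Finset.sum_const, hcard, nsmul_eq_mul]

end HeightLowerBound

end GF

/-- For exponential LPP with the flat substrate whose concave corners form the antidiagonal,
`P(H₀ ≥ n) ≥ c/n` for some `c > 0`, and consequently `E[H₀] = ∑_{n ≥ 1} P(H₀ ≥ n) = ∞`. -/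
theorem flat_substrate_height_infinite_mean
    {Ω : Type*} [MeasurableSpace Ω] (P : Measure Ω) [IsProbabilityMeasure P]
    (W : Pt → Ω → ℝ) (hW : IIDExp P W 1) :
    (∃ c : ℝ, 0 < c ∧ ∀ n : ℕ, 1 ≤ n →
      ENNReal.ofReal (c / (n : ℝ)) ≤ P {ω | HeightGe (fun p => W p ω) 0 n}) ∧
    (∑' n : ℕ, P {ω | HeightGe (fun p => W p ω) 0 (n + 1)}) = ⊤ := by
  have := isProbabilityMeasure_expMeasure one_pos
  have hbound : ∀ n : ℕ, 1 ≤ n →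
      ENNReal.ofReal (1 / (n : ℝ)) ≤ P {ω | HeightGe (fun p => W p ω) 0 n} := fun n hn => by
    rw [one_div, ENNReal.ofReal_inv_of_pos (by positivity), ENNReal.ofReal_natCast]
    exact inv_natCast_le_measure_heightGe hW.1 hW.2 hn
  refine ⟨⟨1, one_pos, hbound⟩, top_le_iff.mp ?_⟩
  have hharmonic : ¬Summable fun n : ℕ => 1 / ((n + 1 : ℕ) : ℝ) :=
    (summable_nat_add_iff 1).not.mpr Real.not_summable_one_div_natCast
  calc ⊤ = ∑' n : ℕ, ENNReal.ofReal (1 / ((n + 1 : ℕ) : ℝ)) :=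
        (ENNReal.tsum_ofReal_eq_top_of_not_summable (fun _ => by positivity) hharmonic).symm
    _ ≤ _ := ENNReal.tsum_le_tsum fun n => hbound (n + 1) (Nat.le_add_left 1 n)
end
end
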